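/- arXiv:2208.09882 — 2 statements merged into one kernel-verified Lean document; each statement's English description precedes it below -/
import Mathlib

section
/- Let μ ≥ 1, ℓ ≥ 0, m ≥ 0 be integers, set M = 4ℓ + 2m + 3 and σ = −(3ℓ + m + 2)·k. Then for every pair (κ, λ) ∈ {(0,1), (1,0)} and every integer k with gcd(k, M) = 1, one has H_M( q^σ · f((−1)^κ q^k, (−1)^κ q^{μM−k})^{2ℓ+1} · f((−1)^λ q^{μM+k}, (−1)^λ q^{μM−k})^{2m+1} ) = 0. -/
/-!
Write `a = 2ℓ + 1`, `b = 2m + 1`, `P = μM`, `ε = (-1)^κ`, so that `M = 2a + b` and the second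
theta series is `f(-ε q^{P+k}, -ε q^{P-k})`. Expanding the product, its coefficient of `q^n` is a
sum over pairs `z = (x, y) ∈ ℤ^a × ℤ^b` of weight `n` of the signs `ε^T (-1)^(Σ y)`, where
`T = Σ x + Σ y`. Modulo `M` the weight is `k T`, so for `n = N - σ` with `M ∣ N` the condition
`gcd(k, M) = 1` forces `T ≡ 3ℓ + m + 2 (mod M)`, i.e. `2T = a + sM` with `s` odd. The reflection
`x_i ↦ 2s + 1 - x_i`, `y_j ↦ s - y_j` then fixes `T` and the weight and changes `Σ y` by the odd
number `bs - 2 Σ y`, so it pairs the terms off with opposite signs.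
-/

noncomputable section

open scoped Classical

namespace ThetaVanish

/-- A subset of `ℤ` that is bounded below is partially well-ordered. -/
theorem isPWO_of_subset_Ici {a : ℤ} {s : Set ℤ} (h : s ⊆ Set.Ici a) : s.IsPWO := by
  have hWF : s.IsWF := by
    rw [Set.isWF_iff_no_descending_seq]
    intro f hf hmem
    have key : ∀ n : ℕ, f n + n ≤ f 0 := by
      intro n
      induction n with
      | zero => simp
      | succ k ih =>
        have h2 : f (k + 1) < f k := hf (Nat.lt_succ_self k)
        push_cast
        push_cast at ih
        omega
    have h1 := key (f 0 - a + 1).toNat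
    have h2 : a ≤ f ((f 0 - a + 1).toNat) := h (hmem _)
    have h3 : a ≤ f 0 := h (hmem 0)
    omega
  exact hWF.isPWO

/-- The coefficient of `q^N` in Ramanujan's theta series `f(ε q^r, ε q^s)`:
the (finite, when `r + s > 0`) sum of `ε^n` over all integers `n` with
`r·n(n+1)/2 + s·n(n-1)/2 = N`. -/
def thetaCoeff (ε r s : ℤ) : ℤ → ℚ := fun N =>
  ∑ᶠ n : ℤ, if r * (n * (n + 1) / 2) + s * (n * (n - 1) / 2) = N then (ε : ℚ) ^ n else 0

theorem thetaCoeff_support (ε r s : ℤ) (h : 0 < r + s) :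
    Function.support (thetaCoeff ε r s) ⊆ Set.Ici (-(r - s) ^ 2) := by
  intro N hN
  simp only [Function.mem_support, ne_eq] at hN
  rw [Set.mem_Ici]
  by_contra hcon
  push_neg at hcon
  apply hN
  apply finsum_eq_zero_of_forall_eq_zero
  intro n
  rw [if_neg]
  intro hQ
  obtain ⟨c, hc⟩ := Int.even_mul_succ_self n
  obtain ⟨e, he⟩ := Int.even_mul_pred_self n
  have hc' : n * (n + 1) = 2 * c := by omega
  have he' : n * (n - 1) = 2 * e := by omega
  have e1 : n * (n + 1) / 2 = c := by omega
  have e2 : n * (n - 1) / 2 = e := by omega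
  rw [e1, e2] at hQ
  have key : 2 * N = (r + s) * n ^ 2 + (r - s) * n := by
    linear_combination -2 * hQ - r * hc' - s * he'
  nlinarith [sq_nonneg (2 * n + r - s), sq_nonneg (r - s),
    mul_nonneg (show (0:ℤ) ≤ r + s - 1 by omega) (sq_nonneg n)]

/-- Ramanujan's theta series `f(ε q^r, ε q^s)` (for a sign `ε ∈ {1, -1}` and
`r + s > 0`), as a formal Laurent series over `ℚ`; junk value `0` if `r + s ≤ 0`. -/
def theta (ε r s : ℤ) : LaurentSeries ℚ :=
  if h : 0 < r + s then
    { coeff := thetaCoeff ε r s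
      isPWO_support' := isPWO_of_subset_Ici (thetaCoeff_support ε r s h) }
  else 0

/-- The huffing operator `H_M`: keep only the coefficients whose index is a
multiple of `M`. -/
def huff (M : ℤ) (G : LaurentSeries ℚ) : LaurentSeries ℚ where
  coeff N := if M ∣ N then G.coeff N else 0
  isPWO_support' := by
    apply Set.IsPWO.mono G.isPWO_support
    intro N hN
    simp only [Function.mem_support, ne_eq] at hN
    rw [HahnSeries.mem_support]
    by_cases hd : M ∣ N
    · rwa [if_pos hd] at hN
    · exact absurd (if_neg hd) hN

open HahnSeries

lemma finsum_eq_zero_of_involutive {α G : Type*} [AddCommGroup G] [IsAddTorsionFree G]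
    {f : α → G} {φ : α → α} (hφ : Function.Involutive φ) (h : ∀ x, f (φ x) = -f x) :
    ∑ᶠ x, f x = 0 := by
  have hcomp := finsum_comp_equiv hφ.toPerm (f := f)
  simp only [Function.Involutive.coe_toPerm, h, finsum_neg_distrib] at hcomp
  exact neg_eq_self.mp hcomp

lemma prod_zpow_eq_zpow_sum {ι G₀ : Type*} [CommGroupWithZero G₀] {x : G₀} (hx : x ≠ 0)
    (t : Finset ι) (f : ι → ℤ) : ∏ i ∈ t, x ^ f i = x ^ ∑ i ∈ t, f i := by
  induction t using Finset.induction_on with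
  | empty => simp
  | insert i t hi ih => rw [Finset.prod_insert hi, Finset.sum_insert hi, ih, zpow_add₀ hx]

section SummableFamily

variable {Γ R α : Type*}

lemma coeff_hsum_of_eq_single [PartialOrder Γ] [DecidableEq Γ] [AddCommMonoid R]
    (s : SummableFamily Γ R α) (e : α → Γ) (c : α → R) (hs : ∀ i, s i = single (e i) (c i))
    (g : Γ) : s.hsum.coeff g = ∑ᶠ i, if e i = g then c i else 0 := by
  rw [SummableFamily.coeff_hsum]
  refine finsum_congr fun i => ?_
  by_cases h : e i = g
  · simp [hs, h]
  · simp [hs, h, coeff_single_of_ne (Ne.symm h)]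

variable [AddCommMonoid Γ] [PartialOrder Γ] [IsOrderedCancelAddMonoid Γ] [CommSemiring R]

lemma prod_single {ι : Type*} (t : Finset ι) (e : ι → Γ) (c : ι → R) :
    ∏ i ∈ t, single (e i) (c i) = single (∑ i ∈ t, e i) (∏ i ∈ t, c i) := by
  induction t using Finset.induction_on with
  | empty => simp
  | insert i t hi ih =>
    rw [Finset.prod_insert hi, Finset.sum_insert hi, Finset.prod_insert hi, ih, single_mul_single]

def powFamily (s : SummableFamily Γ R α) : (n : ℕ) → SummableFamily Γ R (Fin n → α)
  | 0 => SummableFamily.const _ 1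
  | n + 1 => SummableFamily.Equiv (Fin.consEquiv fun _ => α) (s.mul (powFamily s n))

lemma powFamily_apply (s : SummableFamily Γ R α) :
    ∀ (n : ℕ) (x : Fin n → α), powFamily s n x = ∏ i, s (x i)
  | 0, x => by simp [powFamily]
  | n + 1, x => by
    simp [powFamily, Fin.prod_univ_succ, powFamily_apply s n, Fin.tail]

lemma hsum_powFamily (s : SummableFamily Γ R α) : ∀ n, (powFamily s n).hsum = s.hsum ^ n
  | 0 => by simp [powFamily]
  | n + 1 => by
    rw [powFamily, SummableFamily.hsum_equiv, SummableFamily.hsum_mul, hsum_powFamily s n,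
      pow_succ']

end SummableFamily

section Theta

def thetaExponent (r s n : ℤ) : ℤ := r * (n * (n + 1) / 2) + s * (n * (n - 1) / 2)

lemma two_mul_thetaExponent (r s n : ℤ) :
    2 * thetaExponent r s n = (r + s) * n ^ 2 + (r - s) * n := by
  obtain ⟨c, hc⟩ := Int.even_mul_succ_self n
  obtain ⟨d, hd⟩ := Int.even_mul_pred_self n
  rw [thetaExponent, show n * (n + 1) / 2 = c by omega, show n * (n - 1) / 2 = d by omega]
  linear_combination (-r) * hc - s * hd

lemma thetaExponent_modEq {M r s : ℤ} (h : M ∣ r + s) (n : ℤ) :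
    thetaExponent r s n ≡ r * n [ZMOD M] := by
  obtain ⟨d, hd⟩ := Int.even_mul_pred_self n
  have hshift : n * (n + 1) = n * (n - 1) + 2 * n := by ring
  have hsplit : thetaExponent r s n = (r + s) * d + r * n := by
    rw [thetaExponent, show n * (n + 1) / 2 = d + n by omega, show n * (n - 1) / 2 = d by omega]
    ring
  rw [Int.modEq_iff_dvd, hsplit, show r * n - ((r + s) * d + r * n) = -((r + s) * d) by ring]
  exact (h.mul_right d).neg_right

lemma neg_sq_le_thetaExponent {r s : ℤ} (h : 0 < r + s) (n : ℤ) :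
    -(r - s) ^ 2 ≤ thetaExponent r s n := by
  nlinarith [two_mul_thetaExponent r s n, sq_nonneg (2 * n + (r - s)),
    mul_nonneg (show (0 : ℤ) ≤ r + s - 1 by omega) (sq_nonneg n)]

lemma finite_setOf_thetaExponent_eq {r s : ℤ} (h : 0 < r + s) (N : ℤ) :
    {n | thetaExponent r s n = N}.Finite := by
  refine (Set.finite_Icc (-(2 * |N| + |r - s|)) (2 * |N| + |r - s|)).subset fun n hn => ?_
  have h2 := two_mul_thetaExponent r s n
  rw [Set.mem_ofPred_eq.mp hn] at h2
  have hsq : n ^ 2 ≤ 2 * |N| + |r - s| * |n| := by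
    nlinarith [le_abs_self N, neg_abs_le N, abs_mul_abs_self n, neg_abs_le ((r - s) * n),
      abs_mul (r - s) n, mul_nonneg (show (0 : ℤ) ≤ r + s - 1 by omega) (sq_nonneg n)]
  rw [Set.mem_Icc, ← abs_le]
  nlinarith [abs_nonneg n, abs_nonneg N, abs_nonneg (r - s), sq_abs n]

def thetaFamily (ε r s : ℤ) (h : 0 < r + s) : SummableFamily ℤ ℚ ℤ where
  toFun n := single (thetaExponent r s n) ((ε : ℚ) ^ n)
  isPWO_iUnion_support' := by
    refine isPWO_of_subset_Ici (a := -(r - s) ^ 2) fun N hN => ?_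
    obtain ⟨n, hn⟩ := Set.mem_iUnion.mp hN
    rw [support_single_subset hn]
    exact neg_sq_le_thetaExponent h n
  finite_co_support' N := (finite_setOf_thetaExponent_eq h N).subset fun n hn => by
    by_contra hne
    exact hn (coeff_single_of_ne (Ne.symm hne))

lemma theta_eq_hsum_thetaFamily (ε : ℤ) {r s : ℤ} (h : 0 < r + s) :
    theta ε r s = (thetaFamily ε r s h).hsum := by
  ext N
  rw [coeff_hsum_of_eq_single _ (thetaExponent r s) (fun n => (ε : ℚ) ^ n) fun _ => rfl]
  simp only [theta, h, dif_pos]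
  rfl

end Theta

section Tuples

variable (P k : ℤ) {a b : ℕ}

def tupleWeight (z : (Fin a → ℤ) × (Fin b → ℤ)) : ℤ :=
  ∑ i, thetaExponent k (P - k) (z.1 i) + ∑ j, thetaExponent (P + k) (P - k) (z.2 j)

def tupleSum (z : (Fin a → ℤ) × (Fin b → ℤ)) : ℤ := ∑ i, z.1 i + ∑ j, z.2 j

def tupleSign (ε : ℤ) (z : (Fin a → ℤ) × (Fin b → ℤ)) : ℚ :=
  (∏ i, (ε : ℚ) ^ z.1 i) * ∏ j, ((-ε : ℤ) : ℚ) ^ z.2 j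

lemma coeff_theta_pow_mul_theta_pow (hP : 0 < P) (ε N : ℤ) :
    (theta ε k (P - k) ^ a * theta (-ε) (P + k) (P - k) ^ b).coeff N =
      ∑ᶠ z : (Fin a → ℤ) × (Fin b → ℤ), if tupleWeight P k z = N then tupleSign ε z else 0 := by
  rw [theta_eq_hsum_thetaFamily ε (show 0 < k + (P - k) by omega),
    theta_eq_hsum_thetaFamily (-ε) (show 0 < P + k + (P - k) by omega),
    ← hsum_powFamily, ← hsum_powFamily, ← SummableFamily.hsum_mul]
  refine coeff_hsum_of_eq_single _ (tupleWeight P k) (tupleSign ε) (fun z => ?_) N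
  simp only [SummableFamily.mul_toFun, powFamily_apply]
  exact (congrArg₂ _ (prod_single _ _ _) (prod_single _ _ _)).trans single_mul_single

def reflectTuple (s : ℤ) (z : (Fin a → ℤ) × (Fin b → ℤ)) : (Fin a → ℤ) × (Fin b → ℤ) :=
  (fun i => 1 + 2 * s - z.1 i, fun j => s - z.2 j)

variable {P k}

lemma reflectTuple_reflectTuple (s : ℤ) (z : (Fin a → ℤ) × (Fin b → ℤ)) :
    reflectTuple s (reflectTuple s z) = z := by
  ext <;> simp [reflectTuple]

lemma tupleSum_reflectTuple (s : ℤ) (z : (Fin a → ℤ) × (Fin b → ℤ)) :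
    tupleSum (reflectTuple s z) = a + s * (2 * a + b) - tupleSum z := by
  simp only [tupleSum, reflectTuple, Finset.sum_sub_distrib, Finset.sum_const,
    Finset.card_univ, Fintype.card_fin, nsmul_eq_mul]
  push_cast
  ring

lemma tupleWeight_reflectTuple (s : ℤ) (z : (Fin a → ℤ) × (Fin b → ℤ)) :
    tupleWeight P k (reflectTuple s z) =
      tupleWeight P k z + (P * s + k) * (a + s * (2 * a + b) - 2 * tupleSum z) := by
  have h₁ (n : ℤ) : thetaExponent k (P - k) (1 + 2 * s - n) =
      thetaExponent k (P - k) n + (P * s + k) * (1 + 2 * s - 2 * n) := by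
    linarith [two_mul_thetaExponent k (P - k) (1 + 2 * s - n), two_mul_thetaExponent k (P - k) n]
  have h₂ (n : ℤ) : thetaExponent (P + k) (P - k) (s - n) =
      thetaExponent (P + k) (P - k) n + (P * s + k) * (s - 2 * n) := by
    linarith [two_mul_thetaExponent (P + k) (P - k) (s - n),
      two_mul_thetaExponent (P + k) (P - k) n]
  simp only [tupleWeight, tupleSum, reflectTuple, h₁, h₂, Finset.sum_add_distrib,
    ← Finset.mul_sum, Finset.sum_sub_distrib, Finset.sum_const, Finset.card_univ,
    Fintype.card_fin, nsmul_eq_mul]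
  push_cast
  ring

lemma tupleWeight_modEq {M : ℤ} (hM : M ∣ P) (z : (Fin a → ℤ) × (Fin b → ℤ)) :
    tupleWeight P k z ≡ k * tupleSum z [ZMOD M] := by
  have h₁ (n : ℤ) : thetaExponent k (P - k) n ≡ k * n [ZMOD M] :=
    thetaExponent_modEq (by rwa [add_sub_cancel]) n
  have h₂ (n : ℤ) : thetaExponent (P + k) (P - k) n ≡ k * n [ZMOD M] := by
    have hsum : M ∣ P + k + (P - k) := by
      rw [show P + k + (P - k) = 2 * P by ring]
      exact hM.mul_left 2
    refine (thetaExponent_modEq hsum n).trans (Int.modEq_iff_dvd.mpr ?_)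
    rw [show k * n - (P + k) * n = -(P * n) by ring]
    exact (hM.mul_right n).neg_right
  rw [tupleSum, mul_add, Finset.mul_sum, Finset.mul_sum]
  exact Int.ModEq.add (Int.ModEq.sum fun i _ => h₁ _) (Int.ModEq.sum fun j _ => h₂ _)

lemma tupleSign_eq {ε : ℤ} (hε : ε ≠ 0) (z : (Fin a → ℤ) × (Fin b → ℤ)) :
    tupleSign ε z = (-1) ^ (∑ j, z.2 j) * (ε : ℚ) ^ tupleSum z := by
  have hε' : (ε : ℚ) ≠ 0 := Int.cast_ne_zero.mpr hε
  simp only [tupleSign, Int.cast_neg, neg_eq_neg_one_mul (ε : ℚ), mul_zpow,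
    Finset.prod_mul_distrib, prod_zpow_eq_zpow_sum hε',
    prod_zpow_eq_zpow_sum (show (-1 : ℚ) ≠ 0 by norm_num), tupleSum, zpow_add₀ hε']
  ring

lemma tupleSign_reflectTuple {ε : ℤ} (hε : ε ≠ 0) {s : ℤ} (hs : Odd (b * s))
    {z : (Fin a → ℤ) × (Fin b → ℤ)} (hz : tupleSum (reflectTuple s z) = tupleSum z) :
    tupleSign ε (reflectTuple s z) = -tupleSign ε z := by
  have hY : ∑ j, (reflectTuple s z).2 j = (b * s - 2 * ∑ j, z.2 j) + ∑ j, z.2 j := by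
    simp only [reflectTuple, Finset.sum_sub_distrib, Finset.sum_const, Finset.card_univ,
      Fintype.card_fin, nsmul_eq_mul]
    ring
  rw [tupleSign_eq hε, tupleSign_eq hε, hz, hY, zpow_add₀ (by norm_num),
    (hs.sub_even (even_two_mul _)).neg_one_zpow]
  ring

/-- The reflection `reflectTuple s` that fixes `tupleSum z`, if there is one. -/
def tuplePairing (z : (Fin a → ℤ) × (Fin b → ℤ)) : (Fin a → ℤ) × (Fin b → ℤ) :=
  if (2 * a + b : ℤ) ∣ 2 * tupleSum z - a then
    reflectTuple ((2 * tupleSum z - a) / (2 * a + b)) z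
  else z

lemma tupleSum_reflectTuple_of_mul_eq {s : ℤ} {z : (Fin a → ℤ) × (Fin b → ℤ)}
    (hs : s * (2 * a + b) = 2 * tupleSum z - a) : tupleSum (reflectTuple s z) = tupleSum z := by
  rw [tupleSum_reflectTuple]
  linarith

lemma tuplePairing_involutive : Function.Involutive (tuplePairing (a := a) (b := b)) := by
  intro z
  by_cases hz : (2 * a + b : ℤ) ∣ 2 * tupleSum z - a
  · have hT := tupleSum_reflectTuple_of_mul_eq (Int.ediv_mul_cancel hz)
    simp only [tuplePairing, if_pos hz, hT, reflectTuple_reflectTuple]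
  · simp only [tuplePairing, if_neg hz]

end Tuples

theorem coeff_theta_pow_mul_theta_pow_eq_zero {P k ε T₀ N : ℤ} {a b : ℕ} (hP : 0 < P)
    (hε : ε ≠ 0) (ha : Odd a) (hb : Odd b) (hMP : (2 * a + b : ℤ) ∣ P)
    (hk : IsCoprime k (2 * a + b)) (hT₀ : (2 * a + b : ℤ) ∣ 2 * T₀ - a)
    (hN : N ≡ k * T₀ [ZMOD 2 * a + b]) :
    (theta ε k (P - k) ^ a * theta (-ε) (P + k) (P - k) ^ b).coeff N = 0 := by
  rw [coeff_theta_pow_mul_theta_pow P k hP]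
  refine finsum_eq_zero_of_involutive tuplePairing_involutive fun z => ?_
  by_cases hz : (2 * a + b : ℤ) ∣ 2 * tupleSum z - a
  · set s := (2 * tupleSum z - a) / (2 * a + b)
    have hs : s * (2 * a + b) = 2 * tupleSum z - a := Int.ediv_mul_cancel hz
    have hs_odd : Odd (b * s) := by
      have hsM : Odd (s * (2 * a + b)) := by
        rw [hs]
        exact (even_two_mul _).sub_odd ((Int.odd_coe_nat a).mpr ha)
      exact ((Int.odd_coe_nat b).mpr hb).mul (Int.odd_mul.mp hsM).1
    have hT := tupleSum_reflectTuple_of_mul_eq hs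
    have hW : tupleWeight P k (reflectTuple s z) = tupleWeight P k z := by
      rw [tupleWeight_reflectTuple, show (a : ℤ) + s * (2 * a + b) - 2 * tupleSum z = 0 by
        linarith]
      ring
    rw [tuplePairing, if_pos hz, hW, tupleSign_reflectTuple hε hs_odd hT]
    split_ifs <;> simp
  · have hW : tupleWeight P k z ≠ N := by
      intro hW
      have hkT : k * tupleSum z ≡ k * T₀ [ZMOD 2 * a + b] :=
        (tupleWeight_modEq hMP z).symm.trans (hW ▸ hN)
      have hT : (2 * a + b : ℤ) ∣ tupleSum z - T₀ := by
        refine hk.symm.dvd_of_dvd_mul_left ?_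
        rw [mul_sub]
        exact hkT.symm.dvd
      apply hz
      rw [show 2 * tupleSum z - a = 2 * (tupleSum z - T₀) + (2 * T₀ - a) by ring]
      exact dvd_add (hT.mul_left 2) hT₀
    rw [tuplePairing, if_neg hz, if_neg hW, neg_zero]

lemma huff_eq_zero_of_forall_dvd {M : ℤ} {G : LaurentSeries ℚ}
    (h : ∀ N, M ∣ N → G.coeff N = 0) : huff M G = 0 := by
  ext N
  change (if M ∣ N then G.coeff N else 0) = 0
  split_ifs with hN
  exacts [h N hN, rfl]

/-- **Theorem (Type I.2, eq. (1.7))**: with `M = 4ℓ + 2m + 3` and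
`σ = -(3ℓ + m + 2)k`, for `(κ, λ) ∈ {(0,1), (1,0)}` and `gcd(k, M) = 1`,
`H_M(q^σ · f((-1)^κ q^k, (-1)^κ q^{μM-k})^{2ℓ+1} ·
  f((-1)^λ q^{μM+k}, (-1)^λ q^{μM-k})^{2m+1}) = 0`. -/
theorem statement3 (μ ℓ m k M σ : ℤ) (hμ : 1 ≤ μ) (hℓ : 0 ≤ ℓ) (hm : 0 ≤ m)
    (hM : M = 4 * ℓ + 2 * m + 3) (hσ : σ = -(3 * ℓ + m + 2) * k)
    (κ lam : ℕ) (hκlam : (κ = 0 ∧ lam = 1) ∨ (κ = 1 ∧ lam = 0))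
    (hk : Int.gcd k M = 1) :
    huff M (HahnSeries.single σ (1 : ℚ)
      * theta ((-1) ^ κ) k (μ * M - k) ^ (2 * ℓ + 1)
      * theta ((-1) ^ lam) (μ * M + k) (μ * M - k) ^ (2 * m + 1)) = 0 := by
  have hsign : ((-1 : ℤ) ^ lam) = -(-1) ^ κ := by
    rcases hκlam with ⟨rfl, rfl⟩ | ⟨rfl, rfl⟩ <;> norm_num
  lift ℓ to ℕ using hℓ
  lift m to ℕ using hm
  have hMab : M = 2 * ((2 * ℓ + 1 : ℕ) : ℤ) + ((2 * m + 1 : ℕ) : ℤ) := by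
    rw [hM]
    push_cast
    ring
  have hpow (n : ℕ) (x : LaurentSeries ℚ) : x ^ (2 * (n : ℤ) + 1) = x ^ (2 * n + 1) := by
    exact_mod_cast zpow_natCast x (2 * n + 1)
  rw [hsign, hpow, hpow]
  refine huff_eq_zero_of_forall_dvd fun N hN => ?_
  rw [mul_assoc, coeff_single_mul, one_mul]
  rw [hMab] at hN hk ⊢
  refine coeff_theta_pow_mul_theta_pow_eq_zero (T₀ := 3 * ℓ + m + 2) (by positivity)
    (by positivity) (odd_two_mul_add_one ℓ) (odd_two_mul_add_one m) (dvd_mul_left _ _)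
    (Int.isCoprime_iff_gcd_eq_one.mpr hk) ⟨1, by push_cast; ring⟩ ?_
  rw [Int.modEq_iff_dvd, hσ]
  rw [show k * (3 * ℓ + m + 2) - (N - -(3 * ℓ + m + 2) * k) = -N by ring]
  exact hN.neg_right

end ThetaVanish
end
end

section
/- Let μ ≥ 1, ℓ ≥ 0, m ≥ 0 be integers, set M = 4ℓ + 2m + 3 and σ = −(ℓ + m + 1)·k. Then for every pair (κ, λ) ∈ {(0,1), (1,0)} and every integer k with gcd(k, M) = 1, one has H_M( q^σ · f((−1)^κ q^k, (−1)^κ q^{μM−k})^{2ℓ+1} · f((−1)^λ q^k, (−1)^λ q^{2μM−k})^{2m+1} ) = 0. -/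
/-!
Expanding each theta factor as `∑ₙ ε^n q^{e(n)}`, the coefficient of `q^N` in the product is a
signed sum over tuples `(v, w) ∈ ℤ^{2ℓ+1} × ℤ^{2m+1}`. Modulo `M` the exponent of a tuple is
`k (∑ v + ∑ w - (ℓ + m + 1))`, so when `M ∣ N` and `gcd(k, M) = 1` every contributing tuple has
`∑ v + ∑ w = ℓ + m + 1 + M s` for some `s`. On these tuples the reflection
`vᵢ ↦ 1 + 4s - vᵢ`, `wⱼ ↦ 1 + 2s - wⱼ` is an involution that preserves the exponent and multiplies
the sign by `ε₁^{2ℓ+1} ε₂^{2m+1} = -1`, so the coefficient vanishes.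
-/

noncomputable section

open scoped Classical

namespace ThetaVanish

open HahnSeries

section MonomialSum

variable {Γ R ι κ : Type*} [PartialOrder Γ]

section AddCommMonoid

variable [AddCommMonoid R]

def HasMonomialSum (e : ι → Γ) (c : ι → R) (x : HahnSeries Γ R) : Prop :=
  ∃ F : SummableFamily Γ R ι, (∀ i, F i = single (e i) (c i)) ∧ F.hsum = x

variable {e : ι → Γ} {c : ι → R} {x : HahnSeries Γ R}

theorem HasMonomialSum.coeff_eq (hx : HasMonomialSum e c x) (g : Γ) :
    x.coeff g = ∑ᶠ i ∈ {i | e i = g}, c i := by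
  obtain ⟨F, hF, rfl⟩ := hx
  rw [SummableFamily.coeff_hsum, finsum_mem_def]
  congr 1 with i
  simp [hF, coeff_single, Set.indicator_apply, eq_comm]

theorem hasMonomialSum_of_unique [Unique ι] (e : ι → Γ) (c : ι → R) :
    HasMonomialSum e c (single (e default) (c default)) :=
  ⟨SummableFamily.const ι _, fun i => by rw [Unique.eq_default i]; rfl,
    SummableFamily.hsum_unique _⟩

theorem HasMonomialSum.comp_equiv (hx : HasMonomialSum e c x) (E : κ ≃ ι) :
    HasMonomialSum (e ∘ E) (c ∘ E) x := by
  obtain ⟨F, hF, rfl⟩ := hx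
  exact ⟨SummableFamily.Equiv E.symm F, fun i => by simp [SummableFamily.Equiv, hF],
    SummableFamily.hsum_equiv _ _⟩

end AddCommMonoid

variable [AddCommMonoid Γ] [IsOrderedCancelAddMonoid Γ] [CommSemiring R]
  {e : ι → Γ} {c : ι → R} {x y : HahnSeries Γ R}

theorem HasMonomialSum.mul {e' : κ → Γ} {c' : κ → R} (hx : HasMonomialSum e c x)
    (hy : HasMonomialSum e' c' y) :
    HasMonomialSum (fun p : ι × κ => e p.1 + e' p.2) (fun p => c p.1 * c' p.2) (x * y) := by
  obtain ⟨F, hF, rfl⟩ := hx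
  obtain ⟨G, hG, rfl⟩ := hy
  exact ⟨F.mul G, fun p => by simp [hF, hG, single_mul_single], SummableFamily.hsum_mul F G⟩

theorem HasMonomialSum.single_mul (hx : HasMonomialSum e c x) (a : Γ) :
    HasMonomialSum (fun i => a + e i) c (single a 1 * x) := by
  simpa [Function.comp_def] using
    ((hasMonomialSum_of_unique (fun _ : Unit => a) fun _ => (1 : R)).mul hx).comp_equiv
      (Equiv.punitProd ι).symm

theorem HasMonomialSum.pow (hx : HasMonomialSum e c x) (n : ℕ) :
    HasMonomialSum (fun v : Fin n → ι => ∑ i, e (v i)) (fun v => ∏ i, c (v i)) (x ^ n) := by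
  induction n with
  | zero =>
    simpa using hasMonomialSum_of_unique (R := R) (fun v : Fin 0 → ι => ∑ i, e (v i))
      fun v => ∏ i, c (v i)
  | succ n ih =>
    rw [pow_succ']
    simpa [Function.comp_def, Fin.sum_univ_succ, Fin.prod_univ_succ, Fin.tail] using
      (hx.mul ih).comp_equiv (Fin.consEquiv fun _ => ι).symm

end MonomialSum

theorem finsum_mem_eq_zero_of_invOn_neg {α G : Type*} [AddCommGroup G] [IsAddTorsionFree G]
    {S : Set α} {f : α → G} {g : α → α} (hmaps : Set.MapsTo g S S)
    (hinv : ∀ a ∈ S, g (g a) = a) (hneg : ∀ a ∈ S, f (g a) = -f a) :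
    ∑ᶠ a ∈ S, f a = 0 := by
  have hbij : Set.BijOn g S S := Set.InvOn.bijOn ⟨hinv, hinv⟩ hmaps hmaps
  rw [← self_eq_neg]
  calc ∑ᶠ a ∈ S, f a = ∑ᶠ a ∈ S, -f a :=
        (finsum_mem_eq_of_bijOn g hbij fun a ha => (hneg a ha).symm).symm
    _ = -∑ᶠ a ∈ S, f a := by
        simp only [finsum_mem_def, finsum_neg_distrib]

theorem zpow_one_add_sub_of_sq_eq_one {G₀ : Type*} [GroupWithZero G₀] {ε : G₀}
    (hε : ε ^ 2 = 1) {t : ℤ} (ht : Even t) (n : ℤ) : ε ^ (1 + t - n) = ε * ε ^ n := by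
  obtain ⟨t, rfl⟩ := ht
  have hε0 : ε ≠ 0 := by rintro rfl; simp at hε
  have hsq : ε ^ (2 : ℤ) = 1 := by exact_mod_cast hε
  have hinv : (ε ^ n)⁻¹ = ε ^ n :=
    inv_eq_of_mul_eq_one_right (by rw [← zpow_add₀ hε0, ← two_mul, zpow_mul, hsq, one_zpow])
  rw [zpow_sub₀ hε0, zpow_add₀ hε0, ← two_mul, zpow_mul, hsq, one_zpow, zpow_one, mul_one,
    div_eq_mul_inv, hinv]

theorem hasMonomialSum_of_coeff {ι R : Type*} [AddCommMonoid R] {e : ι → ℤ} {c : ι → R}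
    {x : HahnSeries ℤ R} (L : ℤ) (hL : ∀ i, L ≤ e i) (hfin : ∀ N, {i | e i = N}.Finite)
    (hx : ∀ N, x.coeff N = ∑ᶠ i ∈ {i | e i = N}, c i) : HasMonomialSum e c x := by
  refine ⟨⟨fun i => single (e i) (c i), ?_, fun N => (hfin N).subset ?_⟩, fun _ => rfl, ?_⟩
  · refine isPWO_of_subset_Ici (a := L) (Set.iUnion_subset fun i => ?_)
    exact (support_single_subset).trans (Set.singleton_subset_iff.mpr (hL i))
  · intro i hi
    by_contra hne
    exact hi (by simp [Ne.symm hne])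
  · ext N
    rw [SummableFamily.coeff_hsum, hx, finsum_mem_def]
    congr 1 with i
    simp [coeff_single, Set.indicator_apply, eq_comm]

section Theta

def thetaExp (r s n : ℤ) : ℤ := r * (n * (n + 1) / 2) + s * (n * (n - 1) / 2)

theorem two_mul_thetaExp (r s n : ℤ) : 2 * thetaExp r s n = (r + s) * n ^ 2 + (r - s) * n := by
  have h₁ : 2 * (n * (n + 1) / 2) = n * (n + 1) :=
    Int.mul_ediv_cancel' (Int.even_mul_succ_self n).two_dvd
  have h₂ : 2 * (n * (n - 1) / 2) = n * (n - 1) :=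
    Int.mul_ediv_cancel' (Int.even_mul_pred_self n).two_dvd
  unfold thetaExp
  linear_combination r * h₁ + s * h₂

variable {r s : ℤ}

theorem neg_sq_le_thetaExp (hrs : 0 < r + s) (n : ℤ) : -(r - s) ^ 2 ≤ thetaExp r s n := by
  nlinarith [two_mul_thetaExp r s n, sq_nonneg (2 * n + (r - s)), sq_nonneg (r - s),
    mul_nonneg (show (0 : ℤ) ≤ r + s - 1 by omega) (sq_nonneg n)]

theorem finite_setOf_thetaExp_eq (hrs : 0 < r + s) (N : ℤ) :
    {n | thetaExp r s n = N}.Finite := by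
  set B := 2 * |N| + |r - s|
  refine (Set.finite_Icc (-B) B).subset fun n (hn : thetaExp r s n = N) => ?_
  rw [Set.mem_Icc, ← abs_le]
  by_contra! hB
  have h2N := two_mul_thetaExp r s n
  have hquad : (r + s) * n ^ 2 + (r - s) * n ≥ n ^ 2 - |r - s| * |n| := by
    nlinarith [mul_nonneg (show (0 : ℤ) ≤ r + s - 1 by omega) (sq_nonneg n),
      abs_mul_abs_self n, neg_abs_le ((r - s) * n), abs_mul (r - s) n]
  nlinarith [abs_nonneg N, le_abs_self N, abs_nonneg (r - s), abs_mul_abs_self n]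

theorem theta_hasMonomialSum (ε : ℤ) (hrs : 0 < r + s) :
    HasMonomialSum (thetaExp r s) (fun n => (ε : ℚ) ^ n) (theta ε r s) := by
  refine hasMonomialSum_of_coeff _ (neg_sq_le_thetaExp hrs) (finite_setOf_thetaExp_eq hrs)
    fun N => ?_
  rw [theta, dif_pos hrs, finsum_mem_def]
  exact finsum_congr fun n => by simp [thetaExp, Set.indicator_apply]

theorem thetaExp_eq (r s n : ℤ) : thetaExp r s n = (r + s) * (n * (n - 1) / 2) + r * n := by
  apply mul_left_cancel₀ (two_ne_zero (α := ℤ))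
  rw [two_mul_thetaExp, mul_add, ← mul_assoc, mul_comm 2 (r + s), mul_assoc,
    Int.mul_ediv_cancel' (Int.even_mul_pred_self n).two_dvd]
  ring

theorem thetaExp_one_add_sub {t u : ℤ} (h : (r + s) * t = 2 * u) (n : ℤ) :
    thetaExp r s (1 + t - n) = thetaExp r s n + (u + r) * (1 + t - 2 * n) := by
  apply mul_left_cancel₀ (two_ne_zero (α := ℤ))
  rw [mul_add, two_mul_thetaExp, two_mul_thetaExp]
  linear_combination (1 + t - 2 * n) * h

end Theta

section Reflection

variable {a b : ℕ}

def total (p : (Fin a → ℤ) × (Fin b → ℤ)) : ℤ := ∑ i, p.1 i + ∑ j, p.2 j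

def reflect (s : ℤ) (p : (Fin a → ℤ) × (Fin b → ℤ)) : (Fin a → ℤ) × (Fin b → ℤ) :=
  (fun i => 1 + 4 * s - p.1 i, fun j => 1 + 2 * s - p.2 j)

def prodExp (μ M k : ℤ) (p : (Fin a → ℤ) × (Fin b → ℤ)) : ℤ :=
  ∑ i, thetaExp k (μ * M - k) (p.1 i) + ∑ j, thetaExp k (2 * μ * M - k) (p.2 j)

theorem hasMonomialSum_single_mul_theta_pow_mul_theta_pow {μ M : ℤ} (hμM : 0 < μ * M)
    (σ k ε₁ ε₂ : ℤ) (a b : ℕ) :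
    HasMonomialSum (fun p : (Fin a → ℤ) × (Fin b → ℤ) => σ + prodExp μ M k p)
      (fun p => (∏ i, (ε₁ : ℚ) ^ p.1 i) * ∏ j, (ε₂ : ℚ) ^ p.2 j)
      (single σ 1 * theta ε₁ k (μ * M - k) ^ a * theta ε₂ k (2 * μ * M - k) ^ b) := by
  simpa [prodExp, add_assoc] using
    (((theta_hasMonomialSum ε₁ (by linarith)).pow a).single_mul σ).mul
      ((theta_hasMonomialSum ε₂ (by linarith)).pow b)

theorem reflect_reflect (s : ℤ) (p : (Fin a → ℤ) × (Fin b → ℤ)) :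
    reflect s (reflect s p) = p := by
  simp [reflect]

theorem total_reflect (s : ℤ) (p : (Fin a → ℤ) × (Fin b → ℤ)) :
    total (reflect s p) = a * (1 + 4 * s) + b * (1 + 2 * s) - total p := by
  simp only [total, reflect, Finset.sum_sub_distrib, Finset.sum_const, Finset.card_univ,
    Fintype.card_fin, nsmul_eq_mul]
  ring

theorem sum_thetaExp_one_add_sub {r s t u : ℤ} (h : (r + s) * t = 2 * u) (v : Fin a → ℤ) :
    ∑ i, thetaExp r s (1 + t - v i) =
      ∑ i, thetaExp r s (v i) + (u + r) * (a * (1 + t) - 2 * ∑ i, v i) := by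
  simp only [thetaExp_one_add_sub h, Finset.sum_add_distrib, ← Finset.mul_sum,
    Finset.sum_sub_distrib, Finset.sum_const, Finset.card_univ, Fintype.card_fin, nsmul_eq_mul]
  ring

theorem total_reflect_of_eq {M h s : ℤ} (hM : M = 2 * a + b) (hab : (a : ℤ) + b = 2 * h)
    {p : (Fin a → ℤ) × (Fin b → ℤ)} (hp : total p = h + M * s) :
    total (reflect s p) = h + M * s := by
  rw [total_reflect]
  linear_combination hab - 2 * s * hM - hp

theorem prodExp_reflect (μ k : ℤ) {M h s : ℤ} (hM : M = 2 * a + b)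
    (hab : (a : ℤ) + b = 2 * h) {p : (Fin a → ℤ) × (Fin b → ℤ)} (hp : total p = h + M * s) :
    prodExp μ M k (reflect s p) = prodExp μ M k p := by
  have h₁ := sum_thetaExp_one_add_sub (a := a) (r := k) (s := μ * M - k) (t := 4 * s)
    (u := 2 * μ * M * s) (by ring) p.1
  have h₂ := sum_thetaExp_one_add_sub (a := b) (r := k) (s := 2 * μ * M - k) (t := 2 * s)
    (u := 2 * μ * M * s) (by ring) p.2
  simp only [prodExp, reflect, h₁, h₂]
  simp only [total] at hp
  linear_combination
    (-(2 * μ * M * s + k)) * (2 * hp - hab) - 2 * s * (2 * μ * M * s + k) * hM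

theorem dvd_prodExp_sub (μ M k : ℤ) (p : (Fin a → ℤ) × (Fin b → ℤ)) :
    M ∣ prodExp μ M k p - k * total p := by
  have key : prodExp μ M k p - k * total p =
      M * (∑ i, μ * (p.1 i * (p.1 i - 1) / 2) + ∑ j, 2 * μ * (p.2 j * (p.2 j - 1) / 2)) := by
    simp only [prodExp, total, thetaExp_eq, Finset.sum_add_distrib, Finset.mul_sum, mul_add]
    ring_nf
  exact ⟨_, key⟩

theorem dvd_total_sub {μ M k σ h N : ℤ} (hσ : σ = -h * k) (hk : Int.gcd k M = 1)
    (hN : M ∣ N) {p : (Fin a → ℤ) × (Fin b → ℤ)} (hp : σ + prodExp μ M k p = N) :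
    M ∣ total p - h := by
  refine Int.dvd_of_dvd_mul_right_of_gcd_one ?_ (by rwa [Int.gcd_comm])
  have : k * (total p - h) = N - (prodExp μ M k p - k * total p) := by
    rw [hσ] at hp
    linear_combination hp
  rw [this]
  exact dvd_sub hN (dvd_prodExp_sub μ M k p)

theorem prod_zpow_one_add_sub {G₀ : Type*} [CommGroupWithZero G₀] {ε : G₀} (hε : ε ^ 2 = 1)
    {t : ℤ} (ht : Even t) (v : Fin a → ℤ) :
    ∏ i, ε ^ (1 + t - v i) = ε ^ a * ∏ i, ε ^ v i := by
  simp [zpow_one_add_sub_of_sq_eq_one hε ht, Finset.prod_mul_distrib]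

end Reflection

theorem sq_cast_eq_one_of_mul_eq_neg_one {R : Type*} [Ring R] {u v : ℤ} (h : u * v = -1) :
    (u : R) ^ 2 = 1 := by
  rcases Int.eq_one_or_neg_one_of_mul_eq_neg_one h with rfl | rfl <;> simp

theorem huff_coeff (M : ℤ) (G : LaurentSeries ℚ) (N : ℤ) :
    (huff M G).coeff N = if M ∣ N then G.coeff N else 0 :=
  rfl

theorem huff_single_mul_theta_pow_mul_theta_pow_eq_zero {μ k M σ : ℤ} {ℓ m : ℕ} (hμ : 0 < μ)
    (hM : M = 4 * ℓ + 2 * m + 3) (hσ : σ = -(ℓ + m + 1) * k) {ε₁ ε₂ : ℤ} (hε : ε₁ * ε₂ = -1)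
    (hk : Int.gcd k M = 1) :
    huff M (single σ 1 * theta ε₁ k (μ * M - k) ^ (2 * ℓ + 1)
      * theta ε₂ k (2 * μ * M - k) ^ (2 * m + 1)) = 0 := by
  have hM0 : 0 < M := by omega
  have hP := hasMonomialSum_single_mul_theta_pow_mul_theta_pow (mul_pos hμ hM0) σ k ε₁ ε₂
    (2 * ℓ + 1) (2 * m + 1)
  have hε₁ := sq_cast_eq_one_of_mul_eq_neg_one (R := ℚ) hε
  have hε₂ := sq_cast_eq_one_of_mul_eq_neg_one (R := ℚ) ((mul_comm ε₂ ε₁).trans hε)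
  have hsign : (ε₁ : ℚ) ^ (2 * ℓ + 1) * (ε₂ : ℚ) ^ (2 * m + 1) = -1 := by
    rw [pow_succ, pow_succ, pow_mul, pow_mul, hε₁, hε₂]
    exact_mod_cast by simpa using hε
  ext N
  rw [huff_coeff, HahnSeries.coeff_zero, ite_eq_right_iff, hP.coeff_eq]
  intro hN
  set h : ℤ := ℓ + m + 1
  have hab : ((2 * ℓ + 1 : ℕ) : ℤ) + (2 * m + 1 : ℕ) = 2 * h := by push_cast; ring
  have hM' : M = 2 * ((2 * ℓ + 1 : ℕ) : ℤ) + (2 * m + 1 : ℕ) := by push_cast; omega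
  have hs (p : (Fin (2 * ℓ + 1) → ℤ) × (Fin (2 * m + 1) → ℤ)) (hp : σ + prodExp μ M k p = N) :
      total p = h + M * ((total p - h) / M) := by
    linarith [Int.mul_ediv_cancel' (dvd_total_sub hσ hk hN hp)]
  refine finsum_mem_eq_zero_of_invOn_neg (g := fun p => reflect ((total p - h) / M) p)
    (fun p hp => ?_) (fun p hp => ?_) (fun p _ => ?_)
  · show σ + prodExp μ M k (reflect _ p) = N
    rwa [prodExp_reflect μ k hM' hab (hs p hp)]
  · simp only [total_reflect_of_eq hM' hab (hs p hp), add_sub_cancel_left,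
      Int.mul_ediv_cancel_left _ hM0.ne', reflect_reflect]
  · simp only [reflect]
    rw [prod_zpow_one_add_sub hε₁ ⟨2 * _, by ring⟩, prod_zpow_one_add_sub hε₂ (even_two_mul _)]
    linear_combination ((∏ i, (ε₁ : ℚ) ^ p.1 i) * ∏ j, (ε₂ : ℚ) ^ p.2 j) * hsign

/-- **Theorem (Type I.3, eq. (1.9))**: with `M = 4ℓ + 2m + 3` and
`σ = -(ℓ + m + 1)k`, for `(κ, λ) ∈ {(0,1), (1,0)}` and `gcd(k, M) = 1`,
`H_M(q^σ · f((-1)^κ q^k, (-1)^κ q^{μM-k})^{2ℓ+1} ·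
  f((-1)^λ q^k, (-1)^λ q^{2μM-k})^{2m+1}) = 0`. -/
theorem statement5 (μ ℓ m k M σ : ℤ) (hμ : 1 ≤ μ) (hℓ : 0 ≤ ℓ) (hm : 0 ≤ m)
    (hM : M = 4 * ℓ + 2 * m + 3) (hσ : σ = -(ℓ + m + 1) * k)
    (κ lam : ℕ) (hκlam : (κ = 0 ∧ lam = 1) ∨ (κ = 1 ∧ lam = 0))
    (hk : Int.gcd k M = 1) :
    huff M (HahnSeries.single σ (1 : ℚ)
      * theta ((-1) ^ κ) k (μ * M - k) ^ (2 * ℓ + 1)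
      * theta ((-1) ^ lam) k (2 * μ * M - k) ^ (2 * m + 1)) = 0 := by
  lift ℓ to ℕ using hℓ
  lift m to ℕ using hm
  have hε : ((-1) ^ κ : ℤ) * (-1) ^ lam = -1 := by
    rcases hκlam with ⟨rfl, rfl⟩ | ⟨rfl, rfl⟩ <;> norm_num
  exact_mod_cast huff_single_mul_theta_pow_mul_theta_pow_eq_zero (by omega) hM hσ hε hk

end ThetaVanish
end
end
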